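/- arXiv:1912.05948 — 6 statements merged into one kernel-verified Lean document; each statement's English description precedes it below -/
import Mathlib

section
/- Let A be an m×n complex matrix, B an n×p complex matrix, and let G be a {1}-inverse of A (i.e. AGA = A) and H a {1}-inverse of GAB (i.e. (GAB)H(GAB) = GAB). Then HG is a {1}-inverse of AB, i.e. (AB)(HG)(AB) = AB. -/
namespace Matrix

variable {l m n α : Type*} [Fintype l] [Fintype m] [Fintype n] [NonUnitalSemiring α]

/-- `G` is a {1}-inverse of `A`. -/
def IsInnerInverse (A : Matrix m n α) (G : Matrix n m α) : Prop :=
  A * G * A = A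

theorem IsInnerInverse.mul {A : Matrix l m α} {B : Matrix m n α} {G : Matrix m l α}
    {H : Matrix n m α} (hG : IsInnerInverse A G) (hH : IsInnerInverse (G * A * B) H) :
    IsInnerInverse (A * B) (H * G) := by
  unfold IsInnerInverse at *
  calc A * B * (H * G) * (A * B)
      = A * (G * A * B * H * (G * A * B)) := by
        nth_rewrite 1 [← hG]
        simp only [Matrix.mul_assoc]
    _ = A * G * A * B := by rw [hH, Matrix.mul_assoc, Matrix.mul_assoc, Matrix.mul_assoc]
    _ = A * B := by rw [hG]

end Matrix

theorem stmt_0 {m n p : ℕ}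
    (A : Matrix (Fin m) (Fin n) ℂ) (B : Matrix (Fin n) (Fin p) ℂ)
    (G : Matrix (Fin n) (Fin m) ℂ) (H : Matrix (Fin p) (Fin n) ℂ)
    (hG : A * G * A = A)
    (hH : (G * A * B) * H * (G * A * B) = G * A * B) :
    (A * B) * (H * G) * (A * B) = A * B :=
  Matrix.IsInnerInverse.mul hG hH
end

section
/- Let A ∈ ℂ^{m×n}, B ∈ ℂ^{n×p}, C ∈ ℂ^{p×q}, and let G₁ be a {1}-inverse of AB, G₂ a {1}-inverse of BC. Set P = I_p − G₁(AB) and Q = Iₙ − (BC)G₂, and let H be a {1}-inverse of QBP. Then G₂BG₁ − G₂BP·H·QB·G₁ is a {1}-inverse of ABC, i.e. (ABC)(G₂BG₁ − G₂BPHQBG₁)(ABC) = ABC. -/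
/-!
Write `P = 1 - G₁(AB)` and `Q = 1 - (BC)G₂`, so that `(AB)P = 0`, `Q(BC) = 0` and `K = QBP`.
Substituting `(BC)G₂ = 1 - Q` and `G₁(AB) = 1 - P` gives
`(ABC)G₂BP = -AK`, `QBG₁(ABC) = -KC` and `(ABC)G₂BG₁(ABC) = ABC + AKC`,
so the correction term contributes `AKHKC = AKC`, which cancels the excess.
The argument only uses ring identities, so it holds over any ring.
-/

namespace Matrix

variable {R : Type*} [Ring R]

lemma mul_one_sub_mul_eq_zero {m n : Type*} [Fintype m] [Fintype n] [DecidableEq n]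
    {M : Matrix m n R} {G : Matrix n m R} (hG : M * G * M = M) :
    M * (1 - G * M) = 0 := by
  rw [Matrix.mul_sub, Matrix.mul_one, ← Matrix.mul_assoc, hG, sub_self]

lemma one_sub_mul_mul_eq_zero {m n : Type*} [Fintype m] [Fintype n] [DecidableEq m]
    {M : Matrix m n R} {G : Matrix n m R} (hG : M * G * M = M) :
    (1 - M * G) * M = 0 := by
  rw [Matrix.sub_mul, Matrix.one_mul, hG, sub_self]

variable {l n p q : Type*} [Fintype l] [Fintype n] [Fintype p] [Fintype q]
  [DecidableEq n] [DecidableEq p] (A : Matrix l n R) (B : Matrix n p R) (C : Matrix p q R)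
  {G₁ : Matrix p l R} {G₂ : Matrix q n R}

lemma mul_mul_mul_one_sub_eq_neg (hG₁ : (A * B) * G₁ * (A * B) = A * B) :
    (A * B * C) * (G₂ * B * (1 - G₁ * (A * B))) =
      -(A * ((1 - (B * C) * G₂) * B * (1 - G₁ * (A * B)))) := by
  rw [eq_neg_iff_add_eq_zero, ← mul_one_sub_mul_eq_zero hG₁]
  simp only [Matrix.mul_sub, Matrix.sub_mul, Matrix.mul_one, Matrix.one_mul, Matrix.mul_assoc]
  abel

lemma one_sub_mul_mul_mul_eq_neg (hG₂ : (B * C) * G₂ * (B * C) = B * C) :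
    ((1 - (B * C) * G₂) * B) * (G₁ * (A * B * C)) =
      -(((1 - (B * C) * G₂) * B * (1 - G₁ * (A * B))) * C) := by
  rw [eq_neg_iff_add_eq_zero, ← one_sub_mul_mul_eq_zero hG₂]
  simp only [Matrix.mul_sub, Matrix.sub_mul, Matrix.mul_one, Matrix.one_mul, Matrix.mul_assoc]
  abel

lemma mul_mul_mul_mul_eq_add (hG₁ : (A * B) * G₁ * (A * B) = A * B)
    (hG₂ : (B * C) * G₂ * (B * C) = B * C) :
    (A * B * C) * (G₂ * B * G₁) * (A * B * C) =
      A * B * C + A * ((1 - (B * C) * G₂) * B * (1 - G₁ * (A * B))) * C := by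
  have hAB : A * B * G₁ * (A * B) * C = A * B * C := by rw [hG₁]
  have hBC : A * B * C * G₂ * (B * C) = A * B * C := by
    simpa only [Matrix.mul_assoc] using congrArg (A * ·) hG₂
  calc _ = A * B * C + A * ((1 - (B * C) * G₂) * B * (1 - G₁ * (A * B))) * C
          + (A * B * C * G₂ * (B * C) - A * B * C)
          + (A * B * G₁ * (A * B) * C - A * B * C) := by
        simp only [Matrix.mul_sub, Matrix.sub_mul, Matrix.mul_one, Matrix.one_mul,
          Matrix.mul_assoc]
        abel
    _ = _ := by rw [hAB, hBC, sub_self, add_zero, add_zero]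

theorem mul_mul_mul_eq_self_of_inner_inverses {H : Matrix p n R}
    (hG₁ : (A * B) * G₁ * (A * B) = A * B) (hG₂ : (B * C) * G₂ * (B * C) = B * C)
    (hH : ((1 - (B * C) * G₂) * B * (1 - G₁ * (A * B))) * H *
          ((1 - (B * C) * G₂) * B * (1 - G₁ * (A * B)))
        = (1 - (B * C) * G₂) * B * (1 - G₁ * (A * B))) :
    (A * B * C) *
      (G₂ * B * G₁ - G₂ * B * (1 - G₁ * (A * B)) * H * ((1 - (B * C) * G₂) * B) * G₁) *
      (A * B * C) = A * B * C := by
  set K := (1 - (B * C) * G₂) * B * (1 - G₁ * (A * B))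
  have hcorr : (A * B * C) *
      (G₂ * B * (1 - G₁ * (A * B)) * H * ((1 - (B * C) * G₂) * B) * G₁) * (A * B * C) =
        A * K * C := by
    calc _ = ((A * B * C) * (G₂ * B * (1 - G₁ * (A * B)))) * H *
            (((1 - (B * C) * G₂) * B) * (G₁ * (A * B * C))) := by
          simp only [Matrix.mul_assoc]
      _ = (-(A * K)) * H * (-(K * C)) := by
          rw [mul_mul_mul_one_sub_eq_neg A B C hG₁, one_sub_mul_mul_mul_eq_neg A B C hG₂]
      _ = A * (K * H * K) * C := by
          simp only [Matrix.neg_mul, Matrix.mul_neg, neg_neg, Matrix.mul_assoc]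
      _ = A * K * C := by rw [hH]
  rw [Matrix.mul_sub, Matrix.sub_mul, hcorr, mul_mul_mul_mul_eq_add A B C hG₁ hG₂,
    add_sub_cancel_right]

end Matrix

theorem stmt_6 {m n p q : ℕ}
    (A : Matrix (Fin m) (Fin n) ℂ) (B : Matrix (Fin n) (Fin p) ℂ)
    (C : Matrix (Fin p) (Fin q) ℂ)
    (G₁ : Matrix (Fin p) (Fin m) ℂ) (G₂ : Matrix (Fin q) (Fin n) ℂ)
    (H : Matrix (Fin p) (Fin n) ℂ)
    (hG₁ : (A * B) * G₁ * (A * B) = A * B) (hG₂ : (B * C) * G₂ * (B * C) = B * C)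
    (hH : ((1 - (B * C) * G₂) * B * (1 - G₁ * (A * B))) * H *
          ((1 - (B * C) * G₂) * B * (1 - G₁ * (A * B)))
        = (1 - (B * C) * G₂) * B * (1 - G₁ * (A * B))) :
    (A * B * C) *
      (G₂ * B * G₁ - G₂ * B * (1 - G₁ * (A * B)) * H * ((1 - (B * C) * G₂) * B) * G₁) *
      (A * B * C) = A * B * C :=
  Matrix.mul_mul_mul_eq_self_of_inner_inverses A B C hG₁ hG₂ hH
end

section
/- Let A ∈ ℂ^{m×m} and C ∈ ℂ^{n×n} be invertible, B ∈ ℂ^{m×n}, M = ABC, and suppose the column space of A*AB equals the column space of B. Then for every {1,3}-inverse G of B (BGB = B and (BG)* = BG), the matrix C⁻¹GA⁻¹ is a {1,3}-inverse of M, i.e. M(C⁻¹GA⁻¹)M = M and (M·C⁻¹GA⁻¹)* = M·C⁻¹GA⁻¹. -/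
open Matrix

/-!
With `P = B G` (a Hermitian idempotent with the range of `B`) one gets `M X = A P A⁻¹` for
`X = C⁻¹ G A⁻¹`, so `M X M = M` is immediate and only the Hermitian property needs an argument.
The range hypothesis gives `P (A*A B) = A*A B`, hence `P H P = H P` for the Hermitian `H = A*A`;
taking adjoints, `P` commutes with `H`, and this is exactly what makes `A P A⁻¹` Hermitian.
-/

theorem Matrix.mul_mul_eq_self_of_range_le {R m n k : Type*} [CommSemiring R]
    [Fintype m] [Fintype n] [Fintype k] {B : Matrix m n R} {G : Matrix n m R}
    {N : Matrix m k R} (hG : B * G * B = B)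
    (hN : LinearMap.range N.mulVecLin ≤ LinearMap.range B.mulVecLin) : B * G * N = N := by
  refine Matrix.ext_iff_mulVec.2 fun v => ?_
  obtain ⟨y, hy⟩ := hN (LinearMap.mem_range_self N.mulVecLin v)
  rw [mulVecLin_apply, mulVecLin_apply] at hy
  rw [← mulVec_mulVec, ← hy, mulVec_mulVec, hG]

theorem IsSelfAdjoint.commute_of_mul_mul_eq {R : Type*} [Semigroup R] [StarMul R] {P H : R}
    (hP : IsSelfAdjoint P) (hH : IsSelfAdjoint H) (h : P * H * P = H * P) : Commute P H :=
  calc P * H = star (H * P) := by rw [star_mul, hP.star_eq, hH.star_eq]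
    _ = star (P * H * P) := by rw [h]
    _ = P * H * P := by rw [star_mul, star_mul, hP.star_eq, hH.star_eq, mul_assoc]
    _ = H * P := h

theorem Matrix.IsHermitian.mul_mul_nonsing_inv {R m : Type*} [CommRing R] [StarRing R]
    [Fintype m] [DecidableEq m] {A P : Matrix m m R} (hP : P.IsHermitian) (hA : IsUnit A.det)
    (hPA : Commute P (Aᴴ * A)) : (A * P * A⁻¹).IsHermitian := by
  have hAh : IsUnit Aᴴ.det := by rw [det_conjTranspose]; exact hA.star
  have hPAh : P * Aᴴ = Aᴴ * (A * P * A⁻¹) :=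
    calc P * Aᴴ = P * (Aᴴ * A) * A⁻¹ := by
          rw [← mul_assoc, mul_nonsing_inv_cancel_right _ _ hA]
      _ = Aᴴ * (A * P * A⁻¹) := by rw [hPA.eq]; simp only [mul_assoc]
  calc (A * P * A⁻¹)ᴴ = Aᴴ⁻¹ * (P * Aᴴ) := by
        rw [conjTranspose_mul, conjTranspose_mul, conjTranspose_nonsing_inv, hP.eq]
    _ = A * P * A⁻¹ := by rw [hPAh, nonsing_inv_mul_cancel_left _ _ hAh]

theorem stmt_15 {m n : ℕ}
    (A : Matrix (Fin m) (Fin m) ℂ) (C : Matrix (Fin n) (Fin n) ℂ)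
    (B : Matrix (Fin m) (Fin n) ℂ)
    (hA : IsUnit A.det) (hC : IsUnit C.det)
    (hrange : LinearMap.range (Aᴴ * A * B).mulVecLin = LinearMap.range B.mulVecLin)
    (G : Matrix (Fin n) (Fin m) ℂ)
    (hG1 : B * G * B = B) (hG3 : (B * G)ᴴ = B * G) :
    (A * B * C) * (C⁻¹ * G * A⁻¹) * (A * B * C) = A * B * C ∧
    ((A * B * C) * (C⁻¹ * G * A⁻¹))ᴴ = (A * B * C) * (C⁻¹ * G * A⁻¹) := by
  have hMX : (A * B * C) * (C⁻¹ * G * A⁻¹) = A * (B * G) * A⁻¹ := by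
    simp only [Matrix.mul_assoc, mul_nonsing_inv_cancel_left _ _ hC]
  have hPH : B * G * (Aᴴ * A * B) = Aᴴ * A * B := mul_mul_eq_self_of_range_le hG1 hrange.le
  have hPHP : B * G * (Aᴴ * A) * (B * G) = Aᴴ * A * (B * G) := by
    calc B * G * (Aᴴ * A) * (B * G) = B * G * (Aᴴ * A * B) * G := by simp only [Matrix.mul_assoc]
      _ = Aᴴ * A * (B * G) := by rw [hPH]; simp only [Matrix.mul_assoc]
  have hcomm : Commute (B * G) (Aᴴ * A) :=
    IsSelfAdjoint.commute_of_mul_mul_eq hG3 (isHermitian_conjTranspose_mul_self A) hPHP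
  rw [hMX]
  refine ⟨?_, IsHermitian.mul_mul_nonsing_inv hG3 hA hcomm⟩
  calc A * (B * G) * A⁻¹ * (A * B * C) = A * (B * G * B) * C := by
        simp only [Matrix.mul_assoc, nonsing_inv_mul_cancel_left _ _ hA]
    _ = A * B * C := by rw [hG1]
end

section
/- Let A ∈ ℂ^{m×m} and C ∈ ℂ^{n×n} be invertible, B ∈ ℂ^{m×n}, M = ABC. Then M† = C⁻¹B†A⁻¹ holds if and only if the column space of A*AB equals the column space of B and the column space of CC*B* equals the column space of B*. -/
open Matrix

/-- `X` is the Moore–Penrose inverse of `N`. -/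
def IsMoorePenrose {m n : ℕ} (N : Matrix (Fin m) (Fin n) ℂ)
    (X : Matrix (Fin n) (Fin m) ℂ) : Prop :=
  N * X * N = N ∧ X * N * X = X ∧ (N * X)ᴴ = N * X ∧ (X * N)ᴴ = X * N

/-!
By uniqueness of the Moore–Penrose inverse, `Md = C⁻¹ B† A⁻¹` iff `C⁻¹ B† A⁻¹` satisfies the
Penrose equations for `ABC`. The first two always hold; the last two say that `A (BB†) A⁻¹` and
`C⁻¹ (B†B) C` are hermitian, i.e. that the orthogonal projectors `BB†` and `B†B` commute with
`A*A` and `CC*` respectively. A hermitian invertible `G` commutes with the orthogonal projector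
onto the range of `B` iff it maps that range into itself, and by invertibility this means
`range (GB) = range B`.
-/

open LinearMap

section

variable {K : Type*} [Field K] {l m n : Type*} [Fintype l] [Fintype m] [Fintype n]

theorem Matrix.mul_mul_eq_self_of_range_le_s16 {B : Matrix m n K} {X : Matrix n m K}
    (hBXB : B * X * B = B) {W : Matrix m l K} (hW : range W.mulVecLin ≤ range B.mulVecLin) :
    B * X * W = W :=
  ext_iff_mulVec.2 fun v => by
    obtain ⟨y, hy : B *ᵥ y = W *ᵥ v⟩ := hW ⟨v, rfl⟩
    rw [← mulVec_mulVec, ← hy, mulVec_mulVec, hBXB]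

theorem Matrix.range_mul_eq_range_iff_le [DecidableEq m] {G : Matrix m m K} (hG : IsUnit G.det)
    (B : Matrix m n K) :
    range (G * B).mulVecLin = range B.mulVecLin ↔
      range (G * B).mulVecLin ≤ range B.mulVecLin :=
  ⟨le_of_eq, fun h =>
    Submodule.eq_of_le_of_finrank_eq h (rank_mul_eq_right_of_isUnit_det G B hG)⟩

variable [StarRing K]

theorem Matrix.commute_mul_iff_range_mul_le {B : Matrix m n K} {X : Matrix n m K}
    (hBXB : B * X * B = B) (hBX : (B * X).IsHermitian) {G : Matrix m m K}
    (hG : G.IsHermitian) :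
    Commute G (B * X) ↔ range (G * B).mulVecLin ≤ range B.mulVecLin := by
  constructor
  · intro hc
    have hGB : G * B = B * (X * G * B) := by
      calc G * B = G * (B * X) * B := by rw [Matrix.mul_assoc, hBXB]
        _ = B * (X * G * B) := by rw [hc.eq]; simp only [Matrix.mul_assoc]
    rw [hGB, mulVecLin_mul]
    exact range_comp_le_range _ _
  · intro h
    have hPGP : B * X * G * (B * X) = G * (B * X) := by
      rw [← Matrix.mul_assoc, Matrix.mul_assoc (B * X), mul_mul_eq_self_of_range_le_s16 hBXB h,
        Matrix.mul_assoc]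
    -- `G P = P G P` is hermitian, so `G P = (G P)ᴴ = P G`.
    have hGP : (G * (B * X)).IsHermitian := by
      simpa only [hBX.eq, hPGP] using isHermitian_conjTranspose_mul_mul (B * X) hG
    calc G * (B * X) = (G * (B * X))ᴴ := hGP.eq.symm
      _ = B * X * G := by rw [conjTranspose_mul, hBX.eq, hG.eq]

variable [DecidableEq m]

theorem Matrix.isHermitian_mul_mul_inv_iff {A P : Matrix m m K} (hA : IsUnit A.det)
    (hP : P.IsHermitian) :
    (A * P * A⁻¹).IsHermitian ↔ Commute (Aᴴ * A) P := by
  have hAH : IsUnit Aᴴ.det := by rwa [det_conjTranspose, isUnit_star]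
  rw [IsHermitian, conjTranspose_mul, conjTranspose_mul, hP.eq, conjTranspose_nonsing_inv,
    ← ((isUnit_iff_isUnit_det _).2 hAH).mul_right_inj,
    ← ((isUnit_iff_isUnit_det _).2 hA).mul_left_inj, commute_iff_eq, eq_comm]
  simp only [Matrix.mul_assoc, mul_nonsing_inv_cancel_left _ _ hAH,
    nonsing_inv_mul_cancel_right _ _ hA]

theorem Matrix.isHermitian_inv_mul_mul_iff {C Q : Matrix m m K} (hC : IsUnit C.det)
    (hQ : Q.IsHermitian) :
    (C⁻¹ * Q * C).IsHermitian ↔ Commute (C * Cᴴ) Q := by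
  have h := isHermitian_mul_mul_inv_iff (A := Cᴴ) (by rwa [det_conjTranspose, isUnit_star]) hQ
  rw [conjTranspose_conjTranspose] at h
  rw [← h, ← isHermitian_conjTranspose_iff, conjTranspose_mul, conjTranspose_mul, hQ.eq,
    conjTranspose_nonsing_inv, Matrix.mul_assoc]

end

namespace IsMoorePenrose

variable {m n : ℕ} {N : Matrix (Fin m) (Fin n) ℂ} {X Y : Matrix (Fin n) (Fin m) ℂ}

theorem conjTranspose (h : IsMoorePenrose N X) : IsMoorePenrose Nᴴ Xᴴ := by
  obtain ⟨h1, h2, h3, h4⟩ := h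
  refine ⟨?_, ?_, ?_, ?_⟩
  · simpa only [conjTranspose_mul, Matrix.mul_assoc] using congrArg Matrix.conjTranspose h1
  · simpa only [conjTranspose_mul, Matrix.mul_assoc] using congrArg Matrix.conjTranspose h2
  · rwa [← conjTranspose_mul, h4]
  · rwa [← conjTranspose_mul, h3]

theorem unique (hX : IsMoorePenrose N X) (hY : IsMoorePenrose N Y) : X = Y := by
  obtain ⟨hX1, hX2, hX3, hX4⟩ := hX
  obtain ⟨hY1, hY2, hY3, hY4⟩ := hY
  have hXN : X * N = Y * N :=
    calc X * N = (X * N * (Y * N))ᴴ := by rw [Matrix.mul_assoc X, ← Matrix.mul_assoc N, hY1, hX4]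
      _ = Y * N * (X * N) := by rw [conjTranspose_mul, hX4, hY4]
      _ = Y * N := by rw [Matrix.mul_assoc, ← Matrix.mul_assoc N, hX1]
  have hNX : N * X = N * Y :=
    calc N * X = (N * Y * (N * X))ᴴ := by rw [← Matrix.mul_assoc, hY1, hX3]
      _ = N * X * (N * Y) := by rw [conjTranspose_mul, hX3, hY3]
      _ = N * Y := by rw [← Matrix.mul_assoc, hX1]
  calc X = Y * N * X := by rw [← hXN, hX2]
    _ = Y := by rw [Matrix.mul_assoc, hNX, ← Matrix.mul_assoc, hY2]

theorem eq_iff (hX : IsMoorePenrose N X) : X = Y ↔ IsMoorePenrose N Y :=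
  ⟨fun h => h ▸ hX, hX.unique⟩

end IsMoorePenrose

theorem isMoorePenrose_mul_mul_iff {m n : ℕ} {A : Matrix (Fin m) (Fin m) ℂ}
    {C : Matrix (Fin n) (Fin n) ℂ} {B : Matrix (Fin m) (Fin n) ℂ} {Bd : Matrix (Fin n) (Fin m) ℂ}
    (hA : IsUnit A.det) (hC : IsUnit C.det) (hBBdB : B * Bd * B = B) (hBdBBd : Bd * B * Bd = Bd) :
    IsMoorePenrose (A * B * C) (C⁻¹ * Bd * A⁻¹) ↔
      (A * (B * Bd) * A⁻¹).IsHermitian ∧ (C⁻¹ * (Bd * B) * C).IsHermitian := by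
  have hMX : A * B * C * (C⁻¹ * Bd * A⁻¹) = A * (B * Bd) * A⁻¹ := by
    simp only [Matrix.mul_assoc, mul_nonsing_inv_cancel_left _ _ hC]
  have hXM : C⁻¹ * Bd * A⁻¹ * (A * B * C) = C⁻¹ * (Bd * B) * C := by
    simp only [Matrix.mul_assoc, nonsing_inv_mul_cancel_left _ _ hA]
  rw [IsMoorePenrose, hMX, hXM, and_iff_right, and_iff_right]
  · rfl
  · have hBdBBd' : Bd * (B * (Bd * A⁻¹)) = Bd * A⁻¹ := by
      rw [← Matrix.mul_assoc, ← Matrix.mul_assoc, hBdBBd]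
    simp only [Matrix.mul_assoc, mul_nonsing_inv_cancel_left _ _ hC, hBdBBd']
  · have hBBdB' : B * (Bd * (B * C)) = B * C := by
      rw [← Matrix.mul_assoc, ← Matrix.mul_assoc, hBBdB]
    simp only [Matrix.mul_assoc, nonsing_inv_mul_cancel_left _ _ hA, hBBdB']

theorem stmt_16 {m n : ℕ}
    (A : Matrix (Fin m) (Fin m) ℂ) (C : Matrix (Fin n) (Fin n) ℂ)
    (B : Matrix (Fin m) (Fin n) ℂ)
    (hA : IsUnit A.det) (hC : IsUnit C.det)
    (Bd : Matrix (Fin n) (Fin m) ℂ) (Md : Matrix (Fin n) (Fin m) ℂ)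
    (hBd : IsMoorePenrose B Bd) (hMd : IsMoorePenrose (A * B * C) Md) :
    Md = C⁻¹ * Bd * A⁻¹ ↔
      (LinearMap.range (Aᴴ * A * B).mulVecLin = LinearMap.range B.mulVecLin ∧
       LinearMap.range (C * Cᴴ * Bᴴ).mulVecLin = LinearMap.range Bᴴ.mulVecLin) := by
  obtain ⟨hBH₁, -, hBH₃, -⟩ := hBd.conjTranspose
  obtain ⟨hB₁, hB₂, hB₃, hB₄⟩ := hBd
  have hBdB : Bᴴ * Bdᴴ = Bd * B := by rw [← conjTranspose_mul, hB₄]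
  have hAHA : IsUnit (Aᴴ * A).det := by
    rw [det_mul, det_conjTranspose]; exact hA.star.mul hA
  have hCCH : IsUnit (C * Cᴴ).det := by
    rw [det_mul, det_conjTranspose]; exact hC.mul hC.star
  rw [hMd.eq_iff, isMoorePenrose_mul_mul_iff hA hC hB₁ hB₂,
    isHermitian_mul_mul_inv_iff hA hB₃, isHermitian_inv_mul_mul_iff hC hB₄,
    commute_mul_iff_range_mul_le hB₁ hB₃ (isHermitian_conjTranspose_mul_self A), ← hBdB,
    commute_mul_iff_range_mul_le hBH₁ hBH₃ (isHermitian_mul_conjTranspose_self C),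
    range_mul_eq_range_iff_le hAHA, range_mul_eq_range_iff_le hCCH]
end

section
/- Let A, B ∈ ℂ^{m×m} be idempotent matrices (A² = A, B² = B), and let α, β be complex scalars with α ≠ −1, 0 and β ≠ −1, 0. Set λ = αβ(1+α)⁻¹(1+β)⁻¹. Then I_m + αA + βB = (I_m + αA)·(I_m − λAB)·(I_m + βB), and I_m + αA + βB = (I_m + βB)·(I_m − λBA)·(I_m + αA). -/
/-! Since `A` and `B` are idempotent, `(1 + α • A) * A = (1 + α) • A` and `B * (1 + β • B) = (1 + β) • B`,
so the middle factor contributes `-(λ (1 + α) (1 + β)) • (A * B) = -(α * β) • (A * B)`, which cancels exactly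
the cross term of `(1 + α • A) * (1 + β • B) = 1 + α • A + β • B + (α * β) • (A * B)`. -/

namespace IsIdempotentElem

variable {K R : Type*} [Field K] [Ring R] [Algebra K R]

theorem one_add_smul_mul_self {A : R} (hA : IsIdempotentElem A) (α : K) :
    (1 + α • A) * A = (1 + α) • A := by
  rw [add_mul, one_mul, smul_mul_assoc, hA.eq, add_smul, one_smul]

theorem mul_one_add_smul_self {B : R} (hB : IsIdempotentElem B) (β : K) :
    B * (1 + β • B) = (1 + β) • B := by
  rw [mul_add, mul_one, mul_smul_comm, hB.eq, add_smul, one_smul]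

theorem one_add_smul_add_smul_eq_mul {A B : R} (hA : IsIdempotentElem A) (hB : IsIdempotentElem B)
    {α β : K} (hα : 1 + α ≠ 0) (hβ : 1 + β ≠ 0) :
    1 + α • A + β • B =
      (1 + α • A) * (1 - (α * β * (1 + α)⁻¹ * (1 + β)⁻¹) • (A * B)) * (1 + β • B) := by
  have hcross : (1 + α • A) * (A * B) * (1 + β • B) = ((1 + α) * (1 + β)) • (A * B) := by
    rw [← mul_assoc, hA.one_add_smul_mul_self, mul_assoc, hB.mul_one_add_smul_self,
      smul_mul_smul_comm]
  have hscalar : α * β * (1 + α)⁻¹ * (1 + β)⁻¹ * ((1 + α) * (1 + β)) = α * β := by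
    field_simp
  rw [mul_sub, sub_mul, mul_one, mul_smul_comm, smul_mul_assoc, hcross, smul_smul, hscalar]
  simp only [add_mul, mul_add, one_mul, mul_one, smul_mul_smul_comm]
  abel

end IsIdempotentElem

theorem stmt_18_general {m : ℕ}
    (A B : Matrix (Fin m) (Fin m) ℂ)
    (hA : A * A = A) (hB : B * B = B)
    (α β : ℂ) (hα1 : α ≠ -1) (hβ1 : β ≠ -1) :
    (1 : Matrix (Fin m) (Fin m) ℂ) + α • A + β • B =
      (1 + α • A) * (1 - (α * β * (1 + α)⁻¹ * (1 + β)⁻¹) • (A * B)) * (1 + β • B) ∧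
    (1 : Matrix (Fin m) (Fin m) ℂ) + α • A + β • B =
      (1 + β • B) * (1 - (α * β * (1 + α)⁻¹ * (1 + β)⁻¹) • (B * A)) * (1 + α • A) := by
  have hα : 1 + α ≠ 0 := fun h => hα1 (eq_neg_of_add_eq_zero_right h)
  have hβ : 1 + β ≠ 0 := fun h => hβ1 (eq_neg_of_add_eq_zero_right h)
  refine ⟨IsIdempotentElem.one_add_smul_add_smul_eq_mul hA hB hα hβ, ?_⟩
  rw [add_right_comm, IsIdempotentElem.one_add_smul_add_smul_eq_mul hB hA hβ hα]
  congr 4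
  ring

theorem stmt_18 {m : ℕ}
    (A B : Matrix (Fin m) (Fin m) ℂ)
    (hA : A * A = A) (hB : B * B = B)
    (α β : ℂ) (hα1 : α ≠ -1) (hα0 : α ≠ 0) (hβ1 : β ≠ -1) (hβ0 : β ≠ 0) :
    (1 : Matrix (Fin m) (Fin m) ℂ) + α • A + β • B =
      (1 + α • A) * (1 - (α * β * (1 + α)⁻¹ * (1 + β)⁻¹) • (A * B)) * (1 + β • B) ∧
    (1 : Matrix (Fin m) (Fin m) ℂ) + α • A + β • B =
      (1 + β • B) * (1 - (α * β * (1 + α)⁻¹ * (1 + β)⁻¹) • (B * A)) * (1 + α • A) :=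
  stmt_18_general A B hA hB α β hα1 hβ1
end

section
/- Let A, B ∈ ℂ^{m×m} be idempotent, α, β ∈ ℂ with α ≠ −1, 0 and β ≠ −1, 0, and λ = αβ(1+α)⁻¹(1+β)⁻¹. Then X is a {1}-inverse of I_m − λAB (i.e. (I_m − λAB)X(I_m − λAB) = I_m − λAB) if and only if X = (I_m + βB)·Y·(I_m + αA) for some {1}-inverse Y of I_m + αA + βB. -/
/-!
Put `u = I + αA`, `v = I + βB` and `N = I - λAB`. Since `A` and `B` are idempotent, `u` and `v`
are invertible and `u N v = I + αA + βB`. Multiplying by units on both sides transports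
`{1}`-inverses: `X` is one for `N` iff `v⁻¹ X u⁻¹` is one for `u N v`.
-/

section InnerInverse

variable {M : Type*} [Monoid M]

theorem Units.mul_mul_eq_self_conj_iff (u v : Mˣ) (n x : M) :
    u * n * v * x * (u * n * v) = u * n * v ↔ n * (v * x * u) * n = n := by
  have hassoc : u * n * v * x * (u * n * v) = u * (n * (v * x * u) * n) * v := by
    simp only [mul_assoc]
  rw [hassoc, Units.mul_left_inj, Units.mul_right_inj]

theorem Units.mul_mul_eq_self_iff_exists_conj (u v : Mˣ) (n x : M) :
    n * x * n = n ↔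
      ∃ y, u * n * v * y * (u * n * v) = u * n * v ∧ x = v * y * u := by
  constructor
  · intro hx
    have hconj : v * (↑v⁻¹ * x * ↑u⁻¹) * u = x := by
      rw [mul_assoc, Units.inv_mul_cancel_right, Units.mul_inv_cancel_left]
    exact ⟨↑v⁻¹ * x * ↑u⁻¹, by rwa [Units.mul_mul_eq_self_conj_iff, hconj], hconj.symm⟩
  · rintro ⟨y, hy, rfl⟩
    exact (Units.mul_mul_eq_self_conj_iff u v n y).1 hy

end InnerInverse

section Idempotent

variable {K R : Type*} [Field K] [Ring R] [Algebra K R] {a b : R}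

theorem IsIdempotentElem.isUnit_one_add_smul (ha : IsIdempotentElem a) {α : K}
    (hα : α ≠ -1) : IsUnit (1 + α • a) := by
  refine isUnit_iff_exists.2 ⟨1 - (α * (1 + α)⁻¹) • a, ?_, ?_⟩ <;>
  · simp only [mul_sub, sub_mul, mul_add, add_mul, mul_one, one_mul, smul_mul_assoc,
      mul_smul_comm, ha.eq]
    match_scalars <;> grind

theorem one_add_smul_mul_one_sub_smul_mul_mul_one_add_smul (ha : IsIdempotentElem a)
    (hb : IsIdempotentElem b) {α β : K} (hα : α ≠ -1) (hβ : β ≠ -1) :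
    (1 + α • a) * (1 - (α * β * (1 + α)⁻¹ * (1 + β)⁻¹) • (a * b)) * (1 + β • b) =
      1 + α • a + β • b := by
  have haab : a * (a * b) = a * b := by rw [← mul_assoc, ha.eq]
  simp only [mul_sub, sub_mul, mul_add, add_mul, mul_one, one_mul, smul_mul_assoc,
    mul_smul_comm, mul_assoc, hb.eq, haab]
  match_scalars <;> grind

end Idempotent

theorem stmt_19_general {m : ℕ}
    (A B : Matrix (Fin m) (Fin m) ℂ)
    (hA : A * A = A) (hB : B * B = B)
    (α β : ℂ) (hα1 : α ≠ -1) (hβ1 : β ≠ -1)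
    (X : Matrix (Fin m) (Fin m) ℂ) :
    ((1 - (α * β * (1 + α)⁻¹ * (1 + β)⁻¹) • (A * B)) * X *
        (1 - (α * β * (1 + α)⁻¹ * (1 + β)⁻¹) • (A * B))
      = 1 - (α * β * (1 + α)⁻¹ * (1 + β)⁻¹) • (A * B)) ↔
    ∃ Y : Matrix (Fin m) (Fin m) ℂ,
      ((1 + α • A + β • B) * Y * (1 + α • A + β • B) = 1 + α • A + β • B) ∧
      X = (1 + β • B) * Y * (1 + α • A) := by
  rw [← one_add_smul_mul_one_sub_smul_mul_mul_one_add_smul hA hB hα1 hβ1]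
  exact Units.mul_mul_eq_self_iff_exists_conj
    (IsIdempotentElem.isUnit_one_add_smul hA hα1).unit
    (IsIdempotentElem.isUnit_one_add_smul hB hβ1).unit _ X

theorem stmt_19 {m : ℕ}
    (A B : Matrix (Fin m) (Fin m) ℂ)
    (hA : A * A = A) (hB : B * B = B)
    (α β : ℂ) (hα1 : α ≠ -1) (hα0 : α ≠ 0) (hβ1 : β ≠ -1) (hβ0 : β ≠ 0)
    (X : Matrix (Fin m) (Fin m) ℂ) :
    ((1 - (α * β * (1 + α)⁻¹ * (1 + β)⁻¹) • (A * B)) * X *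
        (1 - (α * β * (1 + α)⁻¹ * (1 + β)⁻¹) • (A * B))
      = 1 - (α * β * (1 + α)⁻¹ * (1 + β)⁻¹) • (A * B)) ↔
    ∃ Y : Matrix (Fin m) (Fin m) ℂ,
      ((1 + α • A + β • B) * Y * (1 + α • A + β • B) = 1 + α • A + β • B) ∧
      X = (1 + β • B) * Y * (1 + α • A) :=
  stmt_19_general A B hA hB α β hα1 hβ1 X
end
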